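/- Let φ_i : L → L' and ψ_i : L'' → L be simplicial maps (i = 1,…,m) with ψ_i ∼ ψ_{i+1} for all i. Then SD(φ₁∘ψ₁,…,φ_m∘ψ_m) ≤ SD(φ₁,…,φ_m). -/

import Mathlib

noncomputable section

/-- An abstract simplicial complex on a vertex type `V`. -/
structure ASC (V : Type) where
  faces : Set (Finset V)
  nonempty_of_mem : ∀ ⦃σ⦄, σ ∈ faces → σ.Nonempty
  down_closed : ∀ ⦃σ⦄, σ ∈ faces → ∀ ⦃τ⦄, τ ⊆ σ → τ.Nonempty → τ ∈ faces

/-- A simplicial map between abstract simplicial complexes. -/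
structure SMap {V W : Type} [DecidableEq W] (K : ASC V) (L : ASC W) where
  toFun : V → W
  map_faces : ∀ ⦃σ⦄, σ ∈ K.faces → σ.image toFun ∈ L.faces

/-- The identity simplicial map. -/
def SMap.id {V : Type} [DecidableEq V] (K : ASC V) : SMap K K :=
  ⟨fun v => v, fun σ hσ => by simpa using hσ⟩

/-- Composition of simplicial maps. -/
def SMap.comp {U V W : Type} [DecidableEq V] [DecidableEq W]
    {K : ASC U} {L : ASC V} {M : ASC W}
    (g : SMap L M) (f : SMap K L) : SMap K M :=
  ⟨g.toFun ∘ f.toFun, fun σ hσ => by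
    rw [show σ.image (g.toFun ∘ f.toFun) = (σ.image f.toFun).image g.toFun by
      simp [Finset.image_image]]
    exact g.map_faces (f.map_faces hσ)⟩

/-- Two simplicial maps are contiguous if the union of the images of every
simplex is a simplex of the codomain. -/
def Contiguous {V W : Type} [DecidableEq W] {K : ASC V} {L : ASC W}
    (f g : SMap K L) : Prop :=
  ∀ ⦃σ⦄, σ ∈ K.faces → σ.image f.toFun ∪ σ.image g.toFun ∈ L.faces

/-- Two simplicial maps are in the same contiguity class if they are joined by
a finite chain of pairwise contiguous simplicial maps. -/
def ContigClass {V W : Type} [DecidableEq W] {K : ASC V} {L : ASC W}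
    (f g : SMap K L) : Prop :=
  Relation.ReflTransGen Contiguous f g

/-- `N` is a subcomplex of `K`. -/
def IsSubcomplex {V : Type} (N K : ASC V) : Prop :=
  N.faces ⊆ K.faces

/-- Restriction of a simplicial map to a subcomplex. -/
def SMap.restrict {V W : Type} [DecidableEq W] {N K : ASC V} {L : ASC W}
    (h : IsSubcomplex N K) (f : SMap K L) : SMap N L :=
  ⟨f.toFun, fun _ hσ => f.map_faces (h hσ)⟩

/-- `SDcover φ n` : the domain is covered by `n+1` subcomplexes on each of which
all restrictions of the maps `φ i` are pairwise in the same contiguity class. -/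
def SDcover {V W : Type} [DecidableEq W] {K : ASC V} {L : ASC W} {m : ℕ}
    (φ : Fin m → SMap K L) (n : ℕ) : Prop :=
  ∃ (Ls : Fin (n + 1) → ASC V) (h : ∀ k, IsSubcomplex (Ls k) K),
    (∀ σ ∈ K.faces, ∃ k, σ ∈ (Ls k).faces) ∧
    ∀ k i j, ContigClass (SMap.restrict (h k) (φ i)) (SMap.restrict (h k) (φ j))

/-- The higher contiguity distance `SD(φ₁, …, φ_m)` as a value in `ℕ∞`. -/
def SD {V W : Type} [DecidableEq W] {K : ASC V} {L : ASC W} {m : ℕ}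
    (φ : Fin m → SMap K L) : ℕ∞ :=
  sInf {N : ℕ∞ | ∃ n : ℕ, N = n ∧ SDcover φ n}

/-- The `n`-fold categorical power of a simplicial complex. -/
def ASC.pow {V : Type} [DecidableEq V] (K : ASC V) (n : ℕ) : ASC (Fin n → V) where
  faces := {σ | σ.Nonempty ∧ ∀ i, σ.image (fun v => v i) ∈ K.faces}
  nonempty_of_mem := fun _ hσ => hσ.1
  down_closed := fun σ hσ τ hτσ hτ =>
    ⟨hτ, fun i => K.down_closed (hσ.2 i)
      (Finset.image_subset_image (f := fun v => v i) hτσ) (hτ.image _)⟩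

/-- The `i`-th projection from the `n`-fold categorical power. -/
def ASC.proj {V : Type} [DecidableEq V] (K : ASC V) (n : ℕ) (i : Fin n) :
    SMap (K.pow n) K :=
  ⟨fun v => v i, fun _ hσ => hσ.2 i⟩

/-- The power of a simplicial map. -/
def SMap.pow {V W : Type} [DecidableEq V] [DecidableEq W] {K : ASC V} {L : ASC W}
    (f : SMap K L) (n : ℕ) : SMap (K.pow n) (L.pow n) :=
  ⟨fun v i => f.toFun (v i), fun σ hσ => by
    obtain ⟨h1, h2⟩ := hσ
    refine ⟨h1.image _, fun i => ?_⟩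
    have hf := f.map_faces (h2 i)
    rw [Finset.image_image] at hf ⊢
    exact hf⟩

/-- The higher discrete topological complexity `TC_n(K)`. -/
def TCn {V : Type} [DecidableEq V] (K : ASC V) (n : ℕ) : ℕ∞ :=
  SD (fun i : Fin n => K.proj n i)

/-- The higher discrete topological complexity of a simplicial map. -/
def TCnMap {V W : Type} [DecidableEq V] [DecidableEq W] {K : ASC V} {L : ASC W}
    (φ : SMap K L) (n : ℕ) : ℕ∞ :=
  SD (fun i : Fin n => φ.comp (K.proj n i))

/-- The binary categorical product of two simplicial complexes. -/
def ASC.prod {V W : Type} [DecidableEq V] [DecidableEq W]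
    (K : ASC V) (L : ASC W) : ASC (V × W) where
  faces := {σ | σ.Nonempty ∧ σ.image Prod.fst ∈ K.faces ∧ σ.image Prod.snd ∈ L.faces}
  nonempty_of_mem := fun _ hσ => hσ.1
  down_closed := fun σ hσ τ hτσ hτ =>
    ⟨hτ, K.down_closed hσ.2.1 (Finset.image_subset_image hτσ) (hτ.image _),
      L.down_closed hσ.2.2 (Finset.image_subset_image hτσ) (hτ.image _)⟩

/-- The path complex `I_m` : vertices `0, …, m`, maximal simplices `{i, i+1}`. -/
def pathComplex (m : ℕ) : ASC (Fin (m + 1)) where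
  faces := {σ | σ.Nonempty ∧ ∃ i : ℕ, ∀ j ∈ σ, (j : ℕ) = i ∨ (j : ℕ) = i + 1}
  nonempty_of_mem := fun _ hσ => hσ.1
  down_closed := fun _ hσ _ hτσ hτ =>
    ⟨hτ, hσ.2.imp fun _ h => fun j hj => h j (hτσ hj)⟩

/-- Two simplicial complexes have the same strong homotopy type. -/
def StrongHomotopyType {V W : Type} [DecidableEq V] [DecidableEq W]
    (K : ASC V) (L : ASC W) : Prop :=
  ∃ (f : SMap K L) (g : SMap L K),
    ContigClass (g.comp f) (SMap.id K) ∧ ContigClass (f.comp g) (SMap.id L)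

/-- The one-point simplicial complex. -/
def ptASC : ASC Unit where
  faces := {σ | σ.Nonempty}
  nonempty_of_mem := fun _ hσ => hσ
  down_closed := fun _ _ _ _ hτ => hτ

/-- A simplicial complex is strongly collapsible if it has the strong homotopy
type of a point. -/
def StronglyCollapsible {V : Type} [DecidableEq V] (K : ASC V) : Prop :=
  StrongHomotopyType K ptASC

/-- The inclusion `N → N × I_m` at level `0`. -/
def inclZero {V : Type} [DecidableEq V] (N : ASC V) (m : ℕ) :
    SMap N (N.prod (pathComplex m)) :=
  ⟨fun v => (v, 0), fun σ hσ => by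
    refine ⟨(N.nonempty_of_mem hσ).image _, ?_, ?_⟩
    · rw [Finset.image_image, show (Prod.fst ∘ fun v : V => (v, (0 : Fin (m + 1))))
        = fun v => v from rfl, Finset.image_id']
      exact hσ
    · rw [Finset.image_image]
      refine ⟨(N.nonempty_of_mem hσ).image _, 0, fun j hj => ?_⟩
      simp only [Finset.mem_image, Function.comp] at hj
      obtain ⟨v, -, rfl⟩ := hj
      simp⟩

/-- A simplicial finite-fibration : the homotopy lifting property with respect
to simplicial homotopies `N × I_m → L'` with `N` finite. -/
def IsFiniteFibration {V W : Type} [DecidableEq V] [DecidableEq W]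
    {K : ASC V} {L : ASC W} (φ : SMap K L) : Prop :=
  ∀ (U : Type) [Fintype U] [DecidableEq U] (N : ASC U) (m : ℕ) (g : SMap N K)
    (G : SMap (N.prod (pathComplex m)) L),
    (∀ v, G.toFun (v, 0) = φ.toFun (g.toFun v)) →
    ∃ Gt : SMap (N.prod (pathComplex m)) K,
      (∀ v, Gt.toFun (v, 0) = g.toFun v) ∧ (∀ x, φ.toFun (Gt.toFun x) = G.toFun x)

/-- The constant simplicial map at a vertex `v₀` of `L`. -/
def constMap {V W : Type} [DecidableEq W] (K : ASC V) {L : ASC W} {v₀ : W}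
    (hv₀ : {v₀} ∈ L.faces) : SMap K L :=
  ⟨fun _ => v₀, fun σ hσ => by
    have hsub : σ.image (fun _ => v₀) ⊆ {v₀} := by
      intro x hx
      simp only [Finset.mem_image] at hx
      obtain ⟨v, -, rfl⟩ := hx
      simp
    exact L.down_closed hv₀ hsub ((K.nonempty_of_mem hσ).image _)⟩

/-- A simplicial map is a strong equivalence if it admits an inverse up to
contiguity class. -/
def IsStrongEquiv {V W : Type} [DecidableEq V] [DecidableEq W]
    {K : ASC V} {L : ASC W} (f : SMap K L) : Prop :=
  ∃ g : SMap L K,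
    ContigClass (g.comp f) (SMap.id K) ∧ ContigClass (f.comp g) (SMap.id L)

/-
Pull a cover of `L` back along a single representative `ψ₀` of the common contiguity
class of the `ψ_i`. On the pullback `ψ₀⁻¹(L_k)` of a cover piece `L_k`, each `φ_i ∘ ψ_i` is in the
contiguity class of `φ_i|_{L_k} ∘ ψ₀`, and these are pairwise in the same class because the
restrictions `φ_i|_{L_k}` are. So every cover witnessing `SD(φ)` yields one of the same size for
`SD(φ ∘ ψ)`.
-/

section Contiguity

variable {T V W : Type} [DecidableEq W] {J : ASC T} {K : ASC V} {L : ASC W}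

theorem Contiguous.symm {f g : SMap K L} (h : Contiguous f g) : Contiguous g f := by
  intro σ hσ
  rw [Finset.union_comm]
  exact h hσ

theorem ContigClass.symm {f g : SMap K L} (h : ContigClass f g) : ContigClass g f :=
  Relation.reflTransGen_swap.mp (Relation.ReflTransGen.mono (fun _ _ hc => hc.symm) _ _ h)

theorem ContigClass.trans {f g h : SMap K L} (hfg : ContigClass f g) (hgh : ContigClass g h) :
    ContigClass f h :=
  Relation.ReflTransGen.trans hfg hgh

theorem ContigClass.comp_left [DecidableEq V] (φ : SMap K L) {f g : SMap J K}
    (h : ContigClass f g) : ContigClass (φ.comp f) (φ.comp g) :=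
  Relation.ReflTransGen.lift (p := Contiguous) (φ.comp ·)
    (fun _ _ hc σ hσ => by
      simpa only [SMap.comp, Finset.image_union, Finset.image_image] using φ.map_faces (hc hσ))
    _ _ h

theorem ContigClass.comp_right [DecidableEq V] {f g : SMap K L} (ψ : SMap J K)
    (h : ContigClass f g) : ContigClass (f.comp ψ) (g.comp ψ) :=
  Relation.ReflTransGen.lift (p := Contiguous) (fun f : SMap K L => f.comp ψ)
    (fun _ _ hc σ hσ => by
      simpa only [SMap.comp, Finset.image_image] using hc (ψ.map_faces hσ))
    _ _ h

theorem ContigClass.restrict {N : ASC V} (hN : IsSubcomplex N K) {f g : SMap K L}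
    (h : ContigClass f g) : ContigClass (f.restrict hN) (g.restrict hN) :=
  Relation.ReflTransGen.lift (p := Contiguous) (fun f : SMap K L => f.restrict hN)
    (fun _ _ hc _ hσ => hc (hN hσ)) _ _ h

theorem ContigClass.of_chain {m : ℕ} (ψ : Fin m → SMap K L)
    (hchain : ∀ (i : ℕ) (h : i + 1 < m), ContigClass (ψ ⟨i, Nat.lt_of_succ_lt h⟩) (ψ ⟨i + 1, h⟩))
    (hm : 0 < m) (i : Fin m) : ContigClass (ψ i) (ψ ⟨0, hm⟩) := by
  obtain ⟨i, hi⟩ := i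
  induction i with
  | zero => exact Relation.ReflTransGen.refl
  | succ i ih => exact (hchain i hi).symm.trans (ih (Nat.lt_of_succ_lt hi))

end Contiguity

section Preimage

variable {V W : Type} [DecidableEq W] {K : ASC V} {L : ASC W}

def SMap.preimage (f : SMap K L) (N : ASC W) : ASC V where
  faces := {σ | σ ∈ K.faces ∧ σ.image f.toFun ∈ N.faces}
  nonempty_of_mem _ hσ := K.nonempty_of_mem hσ.1
  down_closed _ hσ _ hτσ hτ :=
    ⟨K.down_closed hσ.1 hτσ hτ, N.down_closed hσ.2 (Finset.image_subset_image hτσ) (hτ.image _)⟩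

theorem SMap.preimage_isSubcomplex (f : SMap K L) (N : ASC W) : IsSubcomplex (f.preimage N) K :=
  fun _ hσ => hσ.1

def SMap.restrictPreimage (f : SMap K L) (N : ASC W) : SMap (f.preimage N) N :=
  ⟨f.toFun, fun _ hσ => hσ.2⟩

end Preimage

section Covers

variable {U V W : Type} [DecidableEq W] {L'' : ASC V} {L : ASC U} {L' : ASC W} {m : ℕ}

theorem SDcover.of_fin_zero (φ : Fin 0 → SMap L L') (n : ℕ) : SDcover φ n :=
  ⟨fun _ => L, fun _ => subset_rfl, fun _ hσ => ⟨0, hσ⟩, fun _ i => i.elim0⟩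

theorem SDcover.precomp [DecidableEq U] {φ : Fin m → SMap L L'} {n : ℕ} (hφ : SDcover φ n)
    (ψ : Fin m → SMap L'' L) (ψ₀ : SMap L'' L) (hψ : ∀ i, ContigClass (ψ i) ψ₀) :
    SDcover (fun i => (φ i).comp (ψ i)) n := by
  obtain ⟨Ls, hLs, hcover, hcontig⟩ := hφ
  refine ⟨fun k => ψ₀.preimage (Ls k), fun k => ψ₀.preimage_isSubcomplex _, fun σ hσ => ?_,
    fun k i j => ?_⟩
  · obtain ⟨k, hk⟩ := hcover _ (ψ₀.map_faces hσ)
    exact ⟨k, hσ, hk⟩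
  · -- Both sides unfold to `φ a` composed with a restriction of `ψ a`, resp. `ψ₀`.
    have hfactor : ∀ a, ContigClass (((φ a).comp (ψ a)).restrict (ψ₀.preimage_isSubcomplex _))
        (((φ a).restrict (hLs k)).comp (ψ₀.restrictPreimage (Ls k))) := fun a =>
      ((hψ a).restrict (ψ₀.preimage_isSubcomplex _)).comp_left (φ a)
    exact (hfactor i).trans (((hcontig k i j).comp_right _).trans (hfactor j).symm)

theorem SD_le_SD_of_SDcover_imp {m' : ℕ} {φ : Fin m → SMap L L'} {φ' : Fin m' → SMap L'' L'}
    (h : ∀ n, SDcover φ n → SDcover φ' n) : SD φ' ≤ SD φ :=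
  sInf_le_sInf fun _ ⟨n, hN, hn⟩ => ⟨n, hN, h n hn⟩

end Covers

/-- `SD(φ₁∘ψ₁,…,φ_m∘ψ_m) ≤ SD(φ₁,…,φ_m)` when the `ψ_i` form a
chain of maps in the same contiguity class. -/
theorem SD_precomp_le
    {U V W : Type} [DecidableEq U] [DecidableEq W]
    {L : ASC U} {L' : ASC W} {L'' : ASC V} {m : ℕ}
    (phi : Fin m → SMap L L') (psi : Fin m → SMap L'' L)
    (hchain : ∀ (i : ℕ) (h : i + 1 < m),
      ContigClass (psi ⟨i, Nat.lt_of_succ_lt h⟩) (psi ⟨i + 1, h⟩)) :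
    SD (fun i => (phi i).comp (psi i)) ≤ SD phi := by
  refine SD_le_SD_of_SDcover_imp fun n hn => ?_
  rcases Nat.eq_zero_or_pos m with rfl | hm
  · exact SDcover.of_fin_zero _ n
  · exact hn.precomp psi (psi ⟨0, hm⟩) (ContigClass.of_chain psi hchain hm)
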